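/- arXiv:1211.3844 — 6 statements merged into one kernel-verified Lean document; each statement's English description precedes it below -/
import Mathlib

section
/- If α + β·i is a complex number with (α - β·i)^n = 1, then the function f(t) = e^{αt} cos(βt) satisfies f^{(n)}(t) = f(t) for all real t. -/
open Real Complex

lemma key_deriv (z : ℂ) (k : ℕ) :
    ∀ t : ℝ, iteratedDeriv k (fun t : ℝ => (Complex.exp (z * t)).re) t
      = (z ^ k * Complex.exp (z * t)).re := by
  induction k with
  | zero => intro t; simp
  | succ k ih =>
    intro t
    rw [iteratedDeriv_succ]
    have heq : deriv (iteratedDeriv k fun t : ℝ => (Complex.exp (z * t)).re) t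
        = deriv (fun t : ℝ => (z ^ k * Complex.exp (z * t)).re) t := by
      apply Filter.EventuallyEq.deriv_eq
      filter_upwards with s using ih s
    rw [heq]
    have hd : HasDerivAt (fun t : ℝ => z ^ k * Complex.exp (z * t))
        (z ^ k * (Complex.exp (z * t) * z)) t := by
      have h1 : HasDerivAt (fun t : ℝ => z * (t : ℂ)) z t := by
        simpa using (Complex.ofRealCLM.hasDerivAt (x := t)).const_mul z
      exact ((h1.cexp)).const_mul (z ^ k)
    have h2 : HasDerivAt (fun t : ℝ => (z ^ k * Complex.exp (z * t)).re)
        ((z ^ k * (Complex.exp (z * t) * z)).re) t :=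
      Complex.reCLM.hasFDerivAt.comp_hasDerivAt t hd
    rw [h2.deriv, pow_succ]
    ring_nf

lemma re_form (α β : ℝ) (s : ℝ) :
    Real.exp (α * s) * Real.cos (β * s)
      = (Complex.exp (((α : ℂ) + β * Complex.I) * s)).re := by
  rw [show ((α : ℂ) + β * Complex.I) * s = (α * s : ℝ) + (β * s : ℝ) * Complex.I by
    push_cast; ring]
  rw [Complex.exp_add, ← Complex.ofReal_exp, Complex.re_ofReal_mul,
    Complex.exp_ofReal_mul_I_re]

theorem exp_cos_satisfies_ode (n : ℕ) (hn : 2 ≤ n) (α β : ℝ)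
    (h : ((α : ℂ) - (β : ℂ) * Complex.I) ^ n = 1) :
    ∀ t : ℝ, iteratedDeriv n (fun t : ℝ => Real.exp (α * t) * Real.cos (β * t)) t
      = Real.exp (α * t) * Real.cos (β * t) := by
  intro t
  set z : ℂ := α + β * Complex.I with hz
  have hzn : z ^ n = 1 := by
    have := congrArg (starRingEnd ℂ) h
    rw [map_pow, map_one] at this
    rw [← this]
    congr 1
    apply Complex.ext <;> simp [hz]
  have hfe : (fun t : ℝ => Real.exp (α * t) * Real.cos (β * t))
      = fun t : ℝ => (Complex.exp (z * t)).re := by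
    funext s; exact re_form α β s
  rw [hfe, key_deriv, hzn, one_mul, ← re_form]
end

section
/- If α + β·i is a complex number with (α + β·i)^n = 1, then the function g(t) = e^{αt} sin(βt) satisfies g^{(n)}(t) = g(t) for all real t. -/
open Real Complex

/-! With `z = α + β i`, `g` is the imaginary part of `t ↦ exp (z t)`. Taking imaginary parts
commutes with differentiation, and the `n`-th derivative of `exp (z t)` is `zⁿ exp (z t) = exp (z t)`. -/

theorem ContinuousLinearMap.iteratedDeriv_comp_left {E F : Type*}
    [NormedAddCommGroup E] [NormedSpace ℝ E] [NormedAddCommGroup F] [NormedSpace ℝ F]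
    (L : E →L[ℝ] F) {f : ℝ → E} {n : ℕ} {x : ℝ} (hf : ContDiffAt ℝ n f x) :
    iteratedDeriv n (L ∘ f) x = L (iteratedDeriv n f x) := by
  simp only [iteratedDeriv_eq_iteratedFDeriv, L.iteratedFDeriv_comp_left hf le_rfl,
    ContinuousLinearMap.compContinuousMultilinearMap_coe, Function.comp_apply]

theorem contDiff_cexp_mul_ofReal (z : ℂ) {n : WithTop ℕ∞} :
    ContDiff ℝ n fun t : ℝ => cexp (z * t) :=
  (contDiff_const.mul ofRealCLM.contDiff).cexp

theorem hasDerivAt_cexp_mul_ofReal (z : ℂ) (t : ℝ) :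
    HasDerivAt (fun s : ℝ => cexp (z * s)) (z * cexp (z * t)) t := by
  simpa [mul_comm] using ((hasDerivAt_id (t : ℂ)).const_mul z).cexp.comp_ofReal

theorem iteratedDeriv_cexp_mul_ofReal (z : ℂ) (n : ℕ) :
    iteratedDeriv n (fun t : ℝ => cexp (z * t)) = fun t : ℝ => z ^ n * cexp (z * t) := by
  induction n with
  | zero => simp
  | succ n ih =>
    funext t
    rw [iteratedDeriv_succ, ih, ((hasDerivAt_cexp_mul_ofReal z t).const_mul (z ^ n)).deriv,
      pow_succ, mul_assoc]

theorem exp_mul_mul_sin_mul_eq_im_cexp (α β t : ℝ) :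
    Real.exp (α * t) * Real.sin (β * t) = (cexp ((α + β * I) * t)).im := by
  simp [exp_im]

theorem exp_sin_satisfies_ode_general (n : ℕ) (α β : ℝ)
    (h : ((α : ℂ) + (β : ℂ) * Complex.I) ^ n = 1) :
    ∀ t : ℝ, iteratedDeriv n (fun t : ℝ => Real.exp (α * t) * Real.sin (β * t)) t
      = Real.exp (α * t) * Real.sin (β * t) := by
  intro t
  simp only [exp_mul_mul_sin_mul_eq_im_cexp]
  calc iteratedDeriv n (imCLM ∘ fun s : ℝ => cexp ((α + β * I) * s)) t
      = (iteratedDeriv n (fun s : ℝ => cexp ((α + β * I) * s)) t).im :=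
        imCLM.iteratedDeriv_comp_left (contDiff_cexp_mul_ofReal _).contDiffAt
    _ = (cexp ((α + β * I) * t)).im := by simp only [iteratedDeriv_cexp_mul_ofReal, h, one_mul]

theorem exp_sin_satisfies_ode (n : ℕ) (hn : 2 ≤ n) (α β : ℝ)
    (h : ((α : ℂ) + (β : ℂ) * Complex.I) ^ n = 1) :
    ∀ t : ℝ, iteratedDeriv n (fun t : ℝ => Real.exp (α * t) * Real.sin (β * t)) t
      = Real.exp (α * t) * Real.sin (β * t) :=
  exp_sin_satisfies_ode_general n α β h
end

section
/- Let m ≥ 1, let -1 < α_m < ... < α_1 < 1 with α_k² + β_k² = 1, and define K̂₁(x) = [ (Σ_k x^{2(1+α_k)})² − (Σ_k α_k x^{2(1+α_k)})² + 2x⁴ Σ_k x^{2(1+α_k)} − 2x⁴ Σ_k α_k x^{2(1+α_k)} ]^{1/2} / ( x (Σ_k x^{2(1+α_k)} + x⁴) ). Then with δ = (1−α_1)/2 and A = √(m² + 4m), one has K̂₁(x) < A / x^{1+δ} for all x > 1. -/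
open Real

theorem odd_case_Khat_bound (m : ℕ) (hm : 1 ≤ m) (α β : Fin m → ℝ)
    (hmono : StrictAnti α) (hbd : ∀ k, -1 < α k ∧ α k < 1)
    (hcirc : ∀ k, (α k) ^ 2 + (β k) ^ 2 = 1)
    (S T : ℝ → ℝ)
    (hS : ∀ x, S x = ∑ k, x ^ (2 * (1 + α k)))
    (hT : ∀ x, T x = ∑ k, α k * x ^ (2 * (1 + α k)))
    (K : ℝ → ℝ)
    (hK : ∀ x, K x = Real.sqrt ((S x) ^ 2 - (T x) ^ 2 + 2 * x ^ 4 * S x - 2 * x ^ 4 * T x) /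
        (x * (S x + x ^ 4)))
    (δ A : ℝ) (hδ : δ = (1 - α ⟨0, hm⟩) / 2) (hA : A = Real.sqrt (m ^ 2 + 4 * m)) :
    ∀ x : ℝ, 1 < x → K x < A / x ^ ((1 : ℝ) + δ) := by
  intro x hx
  have hx0 : (0:ℝ) < x := lt_trans one_pos hx
  have hα0 : α ⟨0, hm⟩ < 1 := (hbd _).2
  have hδ0 : 0 < δ := by rw [hδ]; linarith
  have hexp : ∀ k : Fin m, 2 * (1 + α k) ≤ 4 - 2 * δ := by
    intro k
    have h1 : α k ≤ α ⟨0, hm⟩ := hmono.antitone (by simp [Fin.le_def])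
    rw [hδ]; linarith [(hbd k).2]
  have htpos : ∀ k : Fin m, 0 < x ^ (2 * (1 + α k)) := fun k => Real.rpow_pos_of_pos hx0 _
  have hterm : ∀ k : Fin m, x ^ (2 * (1 + α k)) ≤ x ^ ((4:ℝ) - 2 * δ) := fun k =>
    (Real.rpow_le_rpow_left_iff hx).mpr (hexp k)
  have hne : (Finset.univ : Finset (Fin m)).Nonempty := by
    simp [Finset.univ_nonempty_iff, Fin.pos_iff_nonempty.mp hm]
  have hSpos : 0 < S x := by
    rw [hS]; exact Finset.sum_pos (fun k _ => htpos k) hne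
  have hSle : S x ≤ m * x ^ ((4:ℝ) - 2 * δ) := by
    rw [hS]
    calc ∑ k, x ^ (2 * (1 + α k)) ≤ ∑ _k : Fin m, x ^ ((4:ℝ) - 2 * δ) :=
          Finset.sum_le_sum fun k _ => hterm k
      _ = m * x ^ ((4:ℝ) - 2 * δ) := by
          simp [Finset.sum_const, Finset.card_univ, nsmul_eq_mul]
  have hTle : |T x| ≤ S x := by
    rw [hT, hS]
    refine (Finset.abs_sum_le_sum_abs _ _).trans (Finset.sum_le_sum fun k _ => ?_)
    rw [abs_mul, abs_of_pos (htpos k)]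
    have h1 : |α k| ≤ 1 := le_of_lt (abs_lt.mpr ⟨(hbd k).1, (hbd k).2⟩)
    nlinarith [(htpos k).le]
  have hx4pos : 0 < x ^ 4 := by positivity
  have hx4 : x ^ 4 = x ^ ((4:ℝ)) := by
    rw [← Real.rpow_natCast x 4]; norm_num
  -- bound the numerator's radicand
  have hmul : x ^ 4 * x ^ ((4:ℝ) - 2 * δ) = x ^ ((8:ℝ) - 2 * δ) := by
    rw [hx4, ← Real.rpow_add hx0]; ring_nf
  have hsq : (x ^ ((4:ℝ) - 2 * δ)) ^ 2 ≤ x ^ ((8:ℝ) - 2 * δ) := by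
    have : (x ^ ((4:ℝ) - 2 * δ)) ^ 2 = x ^ ((8:ℝ) - 4 * δ) := by
      rw [← Real.rpow_natCast (x ^ ((4:ℝ) - 2*δ)) 2, ← Real.rpow_mul hx0.le]; norm_num; ring_nf
    rw [this]
    exact (Real.rpow_le_rpow_left_iff hx).mpr (by linarith)
  have hPle : (S x) ^ 2 - (T x) ^ 2 + 2 * x ^ 4 * S x - 2 * x ^ 4 * T x
      ≤ (m ^ 2 + 4 * m) * x ^ ((8:ℝ) - 2 * δ) := by
    have hT1 : -T x ≤ S x := by have := abs_le.mp hTle; linarith [this.1]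
    have h1 : (S x) ^ 2 - (T x) ^ 2 + 2 * x ^ 4 * S x - 2 * x ^ 4 * T x
        ≤ (S x) ^ 2 + 4 * x ^ 4 * S x := by nlinarith [sq_nonneg (T x)]
    have h2 : (S x) ^ 2 ≤ (m:ℝ) ^ 2 * x ^ ((8:ℝ) - 2 * δ) := by
      have := mul_self_le_mul_self hSpos.le hSle
      calc (S x) ^ 2 ≤ ((m:ℝ) * x ^ ((4:ℝ) - 2 * δ)) ^ 2 := by nlinarith
        _ = (m:ℝ) ^ 2 * (x ^ ((4:ℝ) - 2 * δ)) ^ 2 := by ring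
        _ ≤ (m:ℝ) ^ 2 * x ^ ((8:ℝ) - 2 * δ) := by
            apply mul_le_mul_of_nonneg_left hsq (by positivity)
    have h3 : 4 * x ^ 4 * S x ≤ 4 * m * x ^ ((8:ℝ) - 2 * δ) := by
      calc 4 * x ^ 4 * S x ≤ 4 * x ^ 4 * ((m:ℝ) * x ^ ((4:ℝ) - 2 * δ)) := by
            apply mul_le_mul_of_nonneg_left hSle (by positivity)
        _ = 4 * m * (x ^ 4 * x ^ ((4:ℝ) - 2 * δ)) := by ring
        _ = 4 * m * x ^ ((8:ℝ) - 2 * δ) := by rw [hmul]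
    linarith
  have hApos : 0 < A := by
    rw [hA]
    apply Real.sqrt_pos.mpr
    have : (1:ℝ) ≤ m := by exact_mod_cast hm
    nlinarith
  have hx4δ : (0:ℝ) < x ^ ((4:ℝ) - δ) := Real.rpow_pos_of_pos hx0 _
  have hsqrt : Real.sqrt ((S x) ^ 2 - (T x) ^ 2 + 2 * x ^ 4 * S x - 2 * x ^ 4 * T x)
      ≤ A * x ^ ((4:ℝ) - δ) := by
    have heq : (m ^ 2 + 4 * m : ℝ) * x ^ ((8:ℝ) - 2 * δ) = (A * x ^ ((4:ℝ) - δ)) ^ 2 := by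
      have hA2 : A ^ 2 = (m:ℝ) ^ 2 + 4 * m := by
        rw [hA, Real.sq_sqrt (by positivity)]
      have hx2 : (x ^ ((4:ℝ) - δ)) ^ 2 = x ^ ((8:ℝ) - 2 * δ) := by
        rw [← Real.rpow_natCast (x ^ ((4:ℝ) - δ)) 2, ← Real.rpow_mul hx0.le]
        norm_num; ring_nf
      rw [mul_pow, hA2, hx2]
    calc Real.sqrt _ ≤ Real.sqrt ((m ^ 2 + 4 * m : ℝ) * x ^ ((8:ℝ) - 2 * δ)) :=
          Real.sqrt_le_sqrt hPle
      _ = A * x ^ ((4:ℝ) - δ) := by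
          rw [heq, Real.sqrt_sq (by positivity)]
  have hden : 0 < x * (S x + x ^ 4) := by positivity
  have hxpow : 0 < x ^ ((1:ℝ) + δ) := Real.rpow_pos_of_pos hx0 _
  rw [hK, div_lt_div_iff₀ hden hxpow]
  have hpowmul : x ^ ((4:ℝ) - δ) * x ^ ((1:ℝ) + δ) = x * x ^ 4 := by
    rw [← Real.rpow_add hx0]
    have h5 : (4:ℝ) - δ + (1 + δ) = ((5:ℕ):ℝ) := by norm_num
    rw [h5, Real.rpow_natCast]; ring
  calc Real.sqrt _ * x ^ ((1:ℝ) + δ) ≤ A * x ^ ((4:ℝ) - δ) * x ^ ((1:ℝ) + δ) :=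
        mul_le_mul_of_nonneg_right hsqrt hxpow.le
    _ = A * (x * x ^ 4) := by rw [mul_assoc, hpowmul]
    _ < A * (x * (S x + x ^ 4)) := by
        apply mul_lt_mul_of_pos_left _ hApos
        apply mul_lt_mul_of_pos_left _ hx0
        linarith
end

section
/- With notation as above (odd case), the improper integral ∫_1^∞ K̂₁(x) dx converges and is at most (1/δ)√(m² + 4m), where δ = (1−α_1)/2. Hence the curve C_{2m+1}|_0^{+∞} has finite total first curvature. -/
open Real MeasureTheory

theorem odd_case_total_curvature_finite_on_Ioi (m : ℕ) (hm : 1 ≤ m) (α β : Fin m → ℝ)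
    (hmono : StrictAnti α) (hbd : ∀ k, -1 < α k ∧ α k < 1)
    (hcirc : ∀ k, (α k) ^ 2 + (β k) ^ 2 = 1)
    (S T : ℝ → ℝ)
    (hS : ∀ x, S x = ∑ k, x ^ (2 * (1 + α k)))
    (hT : ∀ x, T x = ∑ k, α k * x ^ (2 * (1 + α k)))
    (K : ℝ → ℝ)
    (hK : ∀ x, K x = Real.sqrt ((S x) ^ 2 - (T x) ^ 2 + 2 * x ^ 4 * S x - 2 * x ^ 4 * T x) /
        (x * (S x + x ^ 4)))
    (δ : ℝ) (hδ : δ = (1 - α ⟨0, hm⟩) / 2) :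
    IntegrableOn K (Set.Ioi 1) ∧
      ∫ x in Set.Ioi (1 : ℝ), K x ≤ (1 / δ) * Real.sqrt (m ^ 2 + 4 * m) := by
  set a : ℝ := α ⟨0, hm⟩ with ha
  have ha1 : a < 1 := (hbd _).2
  have hδpos : 0 < δ := by rw [hδ]; linarith
  have hαa : ∀ k, α k ≤ a := by
    intro k
    exact hmono.antitone (by simp [Fin.le_def])
  -- pointwise bound
  have key : ∀ x ∈ Set.Ioi (1:ℝ), 0 ≤ K x ∧ K x ≤ 2 * Real.sqrt m * x ^ (a - 2) := by
    intro x hx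
    have hx1 : (1:ℝ) < x := hx
    have hx0 : (0:ℝ) < x := by linarith
    have hterm : ∀ k : Fin m, 0 < x ^ (2 * (1 + α k)) :=
      fun k => Real.rpow_pos_of_pos hx0 _
    have hS0 : 0 ≤ S x := by
      rw [hS]; exact Finset.sum_nonneg fun k _ => (hterm k).le
    have hST1 : T x ≤ S x := by
      rw [hS, hT]
      exact Finset.sum_le_sum fun k _ => by nlinarith [(hbd k).2, hterm k]
    have hST2 : 0 ≤ S x + T x := by
      rw [hS, hT, ← Finset.sum_add_distrib]
      exact Finset.sum_nonneg fun k _ => by nlinarith [(hbd k).1, hterm k]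
    have hx4 : (0:ℝ) < x ^ 4 := by positivity
    have hx2 : (0:ℝ) < x ^ 2 := by positivity
    have hD : 0 < x * (S x + x ^ 4) :=
      mul_pos hx0 (add_pos_of_nonneg_of_pos hS0 hx4)
    have hPnn : (0:ℝ) ≤ x ^ (2*a - 4) := (Real.rpow_pos_of_pos hx0 _).le
    have hSub : S x ≤ m * (x ^ (2*a-4) * x ^ 2 * x ^ 4) := by
      have hsplit : x ^ (2*(1+a)) = x ^ (2*a-4) * x ^ 2 * x ^ 4 := by
        rw [← Real.rpow_natCast x 2, ← Real.rpow_natCast x 4,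
          ← Real.rpow_add hx0, ← Real.rpow_add hx0]
        norm_num
        ring_nf
      rw [← hsplit, hS]
      calc ∑ k, x ^ (2*(1+α k)) ≤ ∑ _k : Fin m, x ^ (2*(1+a)) :=
            Finset.sum_le_sum fun k _ =>
              Real.rpow_le_rpow_of_exponent_le hx1.le (by linarith [hαa k])
        _ = m * x ^ (2*(1+a)) := by
            simp [Finset.sum_const, nsmul_eq_mul]
    have hm0 : (0:ℝ) ≤ (m:ℝ) := Nat.cast_nonneg m
    have hPsq : x ^ (a-2) * x ^ (a-2) = x ^ (2*a-4) := by
      rw [← Real.rpow_add hx0]; ring_nf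
    have hm2 : Real.sqrt m * Real.sqrt m = m := Real.mul_self_sqrt hm0
    have hRHS : (2 * Real.sqrt m * x ^ (a-2) * (x * (S x + x ^ 4)))^2
        = 4 * m * x ^ (2*a-4) * x ^ 2 * (S x + x ^ 4)^2 := by
      have h0 : (2 * Real.sqrt m * x ^ (a-2) * (x * (S x + x ^ 4)))^2
          = 4 * (Real.sqrt m * Real.sqrt m) * (x ^ (a-2) * x ^ (a-2)) * x ^ 2
            * (S x + x ^ 4)^2 := by ring
      rw [h0, hm2, hPsq]
    have h6 : S x ≤ m * x ^ (2*a-4) * x ^ 2 * (S x + x ^ 4) := by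
      nlinarith [mul_nonneg (mul_nonneg (mul_nonneg hm0 hPnn) hx2.le) hS0]
    have h7 : (2 * S x) * (2 * (S x + x ^ 4))
        ≤ 4 * m * x ^ (2*a-4) * x ^ 2 * (S x + x ^ 4)^2 := by
      nlinarith [mul_le_mul_of_nonneg_right h6 (by linarith : (0:ℝ) ≤ S x + x ^ 4)]
    have h5 : (S x - T x) * (S x + T x + 2 * x ^ 4) ≤ (2 * S x) * (2 * (S x + x ^ 4)) :=
      mul_le_mul (by linarith) (by linarith) (by linarith) (by linarith)
    have hE : (S x)^2 - (T x)^2 + 2 * x ^ 4 * S x - 2 * x ^ 4 * T x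
        ≤ (2 * Real.sqrt m * x ^ (a-2) * (x * (S x + x ^ 4)))^2 := by
      calc (S x)^2 - (T x)^2 + 2 * x ^ 4 * S x - 2 * x ^ 4 * T x
          = (S x - T x) * (S x + T x + 2 * x ^ 4) := by ring
        _ ≤ (2 * S x) * (2 * (S x + x ^ 4)) := h5
        _ ≤ 4 * m * x ^ (2*a-4) * x ^ 2 * (S x + x ^ 4)^2 := h7
        _ = _ := hRHS.symm
    have hBD0 : 0 ≤ 2 * Real.sqrt m * x ^ (a-2) * (x * (S x + x ^ 4)) :=
      mul_nonneg (by positivity) hD.le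
    constructor
    · rw [hK]
      exact div_nonneg (Real.sqrt_nonneg _) hD.le
    · rw [hK, div_le_iff₀ hD]
      calc Real.sqrt ((S x)^2 - (T x)^2 + 2 * x ^ 4 * S x - 2 * x ^ 4 * T x)
          ≤ Real.sqrt ((2 * Real.sqrt m * x ^ (a-2) * (x * (S x + x ^ 4)))^2) :=
            Real.sqrt_le_sqrt hE
        _ = 2 * Real.sqrt m * x ^ (a-2) * (x * (S x + x ^ 4)) := Real.sqrt_sq hBD0
  have ha2 : a - 2 < -1 := by linarith
  have hg : IntegrableOn (fun x : ℝ => 2 * Real.sqrt m * x ^ (a-2)) (Set.Ioi 1) :=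
    (integrableOn_Ioi_rpow_of_lt ha2 one_pos).const_mul _
  have hKm : Measurable K := by
    have hSfun : S = fun x => ∑ k, x ^ (2 * (1 + α k)) := funext hS
    have hTfun : T = fun x => ∑ k, α k * x ^ (2 * (1 + α k)) := funext hT
    have hSm : Measurable S := by
      rw [hSfun]
      exact Finset.measurable_sum _ fun k _ => measurable_id.pow measurable_const
    have hTm : Measurable T := by
      rw [hTfun]
      exact Finset.measurable_sum _ fun k _ =>
        (measurable_id.pow measurable_const).const_mul _
    have hKfun : K = fun x => Real.sqrt ((S x) ^ 2 - (T x) ^ 2 + 2 * x ^ 4 * S x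
        - 2 * x ^ 4 * T x) / (x * (S x + x ^ 4)) := funext hK
    rw [hKfun]
    apply Measurable.div
    · exact (((((hSm.pow_const 2).sub (hTm.pow_const 2)).add
        (((measurable_id.pow_const 4).const_mul 2).mul hSm)).sub
        (((measurable_id.pow_const 4).const_mul 2).mul hTm)).sqrt)
    · exact measurable_id.mul (hSm.add (measurable_id.pow_const 4))
  have hint : IntegrableOn K (Set.Ioi 1) := by
    apply Integrable.mono' hg hKm.aestronglyMeasurable.restrict
    filter_upwards [self_mem_ae_restrict measurableSet_Ioi] with x hx
    rw [Real.norm_eq_abs, abs_of_nonneg (key x hx).1]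
    exact (key x hx).2
  refine ⟨hint, ?_⟩
  have hval : ∫ x in Set.Ioi (1:ℝ), x ^ (a-2) = 1 / (1 - a) := by
    rw [integral_Ioi_rpow_of_lt ha2 one_pos]
    rw [Real.one_rpow, div_eq_div_iff (by linarith) (by linarith)]
    ring
  calc ∫ x in Set.Ioi (1:ℝ), K x
      ≤ ∫ x in Set.Ioi (1:ℝ), 2 * Real.sqrt m * x ^ (a-2) :=
        setIntegral_mono_on hint hg measurableSet_Ioi fun x hx => (key x hx).2
    _ = 2 * Real.sqrt m * ∫ x in Set.Ioi (1:ℝ), x ^ (a-2) := integral_const_mul _ _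
    _ = (1 / δ) * Real.sqrt m := by
        rw [hval, hδ]
        have h2 : (1:ℝ) - a ≠ 0 := by linarith
        field_simp
    _ ≤ (1 / δ) * Real.sqrt (m ^ 2 + 4 * m) := by
        have hm0' : (0:ℝ) ≤ (m:ℝ) := Nat.cast_nonneg m
        have hmle : (m:ℝ) ≤ (m:ℝ) ^ 2 + 4 * m := by nlinarith
        exact mul_le_mul_of_nonneg_left (Real.sqrt_le_sqrt hmle) (by positivity)
end

section
/- Let m ≥ 1 and −1 < α_m < ... < α_1 < 1 with the multiset {α_k} symmetric under negation, and define L̃₁(x) = [ (Σ_k x^{2(1+α_k)})² − (Σ_k α_k x^{2(1+α_k)})² + 2x⁴ (Σ_k x^{2(1+α_k)} − Σ_k α_k x^{2(1+α_k)}) + 2(Σ_k x^{2(1+α_k)} + Σ_k α_k x^{2(1+α_k)}) + 4x⁴ ]^{1/2} / ( x (Σ_k x^{2(1+α_k)} + x⁴ + 1) ). Then with δ = (1−α_1)/2 and B = √(8m² + 8m), L̃₁(x) < B/x^{1+δ} for all x > 1, and hence ∫_1^∞ L̃₁(x) dx ≤ (1/δ)√(8m² + 8m) < ∞. -/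
open Real MeasureTheory

set_option maxHeartbeats 800000 in
theorem even_case_Ltilde_bound (m : ℕ) (hm : 1 ≤ m) (α : Fin m → ℝ)
    (hmono : StrictAnti α) (hbd : ∀ k, -1 < α k ∧ α k < 1)
    (hsym : ∃ σ : Equiv.Perm (Fin m), ∀ k, α (σ k) = -α k)
    (S T : ℝ → ℝ)
    (hS : ∀ x, S x = ∑ k, x ^ (2 * (1 + α k)))
    (hT : ∀ x, T x = ∑ k, α k * x ^ (2 * (1 + α k)))
    (L : ℝ → ℝ)
    (hL : ∀ x, L x = Real.sqrt ((S x) ^ 2 - (T x) ^ 2 + 2 * x ^ 4 * (S x - T x)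
          + 2 * (S x + T x) + 4 * x ^ 4) /
        (x * (S x + x ^ 4 + 1)))
    (δ B : ℝ) (hδ : δ = (1 - α ⟨0, hm⟩) / 2) (hB : B = Real.sqrt (8 * m ^ 2 + 8 * m)) :
    (∀ x : ℝ, 1 < x → L x < B / x ^ ((1 : ℝ) + δ)) ∧
      IntegrableOn L (Set.Ioi 1) ∧
      ∫ x in Set.Ioi (1 : ℝ), L x ≤ (1 / δ) * Real.sqrt (8 * m ^ 2 + 8 * m) := by
  obtain ⟨hα0lo, hα0hi⟩ := hbd ⟨0, hm⟩
  have hδpos : 0 < δ := by rw [hδ]; linarith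
  have hδlt : δ < 1 := by rw [hδ]; linarith
  have hm1 : (1 : ℝ) ≤ (m : ℝ) := by exact_mod_cast hm
  have hm0 : (0 : ℝ) < (m : ℝ) := by linarith
  have hBsqarg : (0 : ℝ) < 8 * (m : ℝ) ^ 2 + 8 * m := by positivity
  have hBsq : B ^ 2 = 8 * (m : ℝ) ^ 2 + 8 * m := by
    rw [hB, sq_sqrt hBsqarg.le]
  have hBpos : 0 < B := by rw [hB]; exact Real.sqrt_pos.2 hBsqarg
  have hne : Nonempty (Fin m) := Fin.pos_iff_nonempty.mp hm
  -- positivity of S and bound |T| ≤ S, S ≤ m x^(2(1+α₀)) for x > 1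
  have hSpos : ∀ x : ℝ, 0 < x → 0 < S x := by
    intro x hx
    rw [hS]
    exact Finset.sum_pos (fun k _ => rpow_pos_of_pos hx _) Finset.univ_nonempty
  have hTS : ∀ x : ℝ, 0 < x → |T x| ≤ S x := by
    intro x hx
    rw [hT, hS]
    refine (Finset.abs_sum_le_sum_abs _ _).trans (Finset.sum_le_sum fun k _ => ?_)
    have hαk : |α k| ≤ 1 := by
      obtain ⟨h1, h2⟩ := hbd k
      rw [abs_le]; constructor <;> linarith
    rw [abs_mul, abs_of_pos (rpow_pos_of_pos hx (2 * (1 + α k)))]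
    calc |α k| * x ^ (2 * (1 + α k)) ≤ 1 * x ^ (2 * (1 + α k)) :=
          mul_le_mul_of_nonneg_right hαk (rpow_pos_of_pos hx _).le
      _ = x ^ (2 * (1 + α k)) := one_mul _
  have hαle : ∀ k : Fin m, α k ≤ α ⟨0, hm⟩ := by
    intro k
    exact hmono.antitone (by simp [Fin.le_def])
  have hSle : ∀ x : ℝ, 1 ≤ x → S x ≤ (m : ℝ) * x ^ (2 * (1 + α ⟨0, hm⟩)) := by
    intro x hx
    rw [hS]
    calc (∑ k, x ^ (2 * (1 + α k)))
        ≤ ∑ _k : Fin m, x ^ (2 * (1 + α ⟨0, hm⟩)) :=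
          Finset.sum_le_sum fun k _ =>
            rpow_le_rpow_of_exponent_le hx (by linarith [hαle k])
      _ = (m : ℝ) * x ^ (2 * (1 + α ⟨0, hm⟩)) := by
          simp [Finset.sum_const, nsmul_eq_mul]
  -- the pointwise bound
  have hpt : ∀ x : ℝ, 1 < x → L x < B / x ^ ((1 : ℝ) + δ) := by
    intro x hx1
    have hx0 : (0 : ℝ) < x := by linarith
    have hx1' : (1 : ℝ) ≤ x := hx1.le
    set s := S x with hs_def
    set t := T x with ht_def
    set p : ℝ := x ^ 4 with hp_def
    set E : ℝ := x ^ (2 * δ) with hE_def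
    have hp0 : (0 : ℝ) < p := by positivity
    have hp1 : (1 : ℝ) ≤ p := one_le_pow₀ hx1'
    have hE0 : (0 : ℝ) ≤ E := (rpow_pos_of_pos hx0 _).le
    have hspos : 0 < s := hSpos x hx0
    have hts : |t| ≤ s := hTS x hx0
    have ht1 : t ≤ s := (abs_le.mp hts).2
    have ht2 : -s ≤ t := (abs_le.mp hts).1
    have hrpow4 : x ^ ((4 : ℝ)) = p := by
      rw [hp_def, ← Real.rpow_natCast x 4]; norm_num
    have hEp : E ≤ p := by
      rw [hE_def, ← hrpow4]
      exact rpow_le_rpow_of_exponent_le hx1' (by linarith)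
    have hsE : s * E ≤ (m : ℝ) * p := by
      have h1 : s * E ≤ ((m : ℝ) * x ^ (2 * (1 + α ⟨0, hm⟩))) * E :=
        mul_le_mul_of_nonneg_right (hSle x hx1') hE0
      have h2 : x ^ (2 * (1 + α ⟨0, hm⟩)) * E = x ^ (2 * (1 + α ⟨0, hm⟩) + 2 * δ) :=
        (Real.rpow_add hx0 _ _).symm
      have h3 : x ^ (2 * (1 + α ⟨0, hm⟩) + 2 * δ) ≤ x ^ ((4 : ℝ)) := by
        apply rpow_le_rpow_of_exponent_le hx1'
        rw [hδ]; ring_nf; linarith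
      calc s * E ≤ ((m : ℝ) * x ^ (2 * (1 + α ⟨0, hm⟩))) * E := h1
        _ = (m : ℝ) * (x ^ (2 * (1 + α ⟨0, hm⟩)) * E) := by ring
        _ = (m : ℝ) * x ^ (2 * (1 + α ⟨0, hm⟩) + 2 * δ) := by rw [h2]
        _ ≤ (m : ℝ) * x ^ ((4 : ℝ)) := by
            exact mul_le_mul_of_nonneg_left h3 hm0.le
        _ = (m : ℝ) * p := by rw [hrpow4]
    -- the key algebraic inequality
    have key : (s ^ 2 - t ^ 2 + 2 * p * (s - t) + 2 * (s + t) + 4 * p) * E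
        ≤ (8 * (m : ℝ) ^ 2 + 8 * m) * (s + p) ^ 2 := by
      have h1 : 0 ≤ E * t ^ 2 := mul_nonneg hE0 (sq_nonneg t)
      have h2 : 0 ≤ p * E * (s + t) := by
        apply mul_nonneg (mul_nonneg hp0.le hE0); linarith
      have h3 : 0 ≤ E * (s - t) := mul_nonneg hE0 (by linarith)
      have h4 : s * (s * E) ≤ s * ((m : ℝ) * p) :=
        mul_le_mul_of_nonneg_left hsE hspos.le
      have h5 : p * (s * E) ≤ p * ((m : ℝ) * p) :=
        mul_le_mul_of_nonneg_left hsE hp0.le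
      have h6 : s * E ≤ (m : ℝ) * p := hsE
      have h7 : p * E ≤ p * p := mul_le_mul_of_nonneg_left hEp hp0.le
      have h8 : (m : ℝ) * p ≤ (m : ℝ) * p * p := by
        nlinarith [mul_nonneg (mul_nonneg hm0.le hp0.le) (sub_nonneg.2 hp1)]
      have h9 : 0 ≤ (m : ℝ) * s * p := by positivity
      have h10 : 0 ≤ ((m : ℝ) - 1) * (s * p) := by
        apply mul_nonneg (by linarith) (by positivity)
      have h11 : (4 : ℝ) * (p * p) ≤ 8 * (m : ℝ) ^ 2 * (p * p) :=
        mul_le_mul_of_nonneg_right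
          (by nlinarith [sq_nonneg ((m:ℝ) - 1)] : (4:ℝ) ≤ 8 * (m:ℝ) ^ 2)
          (mul_nonneg hp0.le hp0.le)
      have h12 : 0 ≤ (m : ℝ) * (s * s) := by positivity
      have h13 : 0 ≤ (m : ℝ) ^ 2 * (s * s) := by positivity
      have h14 : 0 ≤ (m : ℝ) ^ 2 * (s * p) := by positivity
      linarith [h1, h2, h3, h4, h5, h6, h7, h8, h9, h10, h11, h12, h13, h14]
    have hDpos : 0 < x * (s + p + 1) := by
      apply mul_pos hx0; linarith
    have hXpos : 0 < x ^ ((1 : ℝ) + δ) := rpow_pos_of_pos hx0 _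
    have hX2 : (x ^ ((1 : ℝ) + δ)) ^ 2 = x ^ 2 * E := by
      rw [sq, ← Real.rpow_add hx0]
      have h : (1 : ℝ) + δ + (1 + δ) = 2 + 2 * δ := by ring
      rw [h, Real.rpow_add hx0]
      congr 1
      rw [← Real.rpow_natCast x 2]; norm_num
    rw [hL, ← hs_def, ← ht_def, ← hp_def]
    rw [div_lt_div_iff₀ hDpos hXpos, ← lt_div_iff₀ hXpos,
      Real.sqrt_lt' (div_pos (mul_pos hBpos hDpos) hXpos)]
    rw [div_pow, mul_pow, lt_div_iff₀ (by positivity : (0:ℝ) < (x ^ ((1:ℝ)+δ)) ^ 2), hX2, hBsq]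
    have hstep : (s ^ 2 - t ^ 2 + 2 * p * (s - t) + 2 * (s + t) + 4 * p) * (x ^ 2 * E)
        < (8 * (m : ℝ) ^ 2 + 8 * m) * (x * (s + p + 1)) ^ 2 := by
      calc (s ^ 2 - t ^ 2 + 2 * p * (s - t) + 2 * (s + t) + 4 * p) * (x ^ 2 * E)
          = ((s ^ 2 - t ^ 2 + 2 * p * (s - t) + 2 * (s + t) + 4 * p) * E) * x ^ 2 := by
            ring
        _ ≤ ((8 * (m : ℝ) ^ 2 + 8 * m) * (s + p) ^ 2) * x ^ 2 :=
            mul_le_mul_of_nonneg_right key (sq_nonneg x)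
        _ < ((8 * (m : ℝ) ^ 2 + 8 * m) * (s + p + 1) ^ 2) * x ^ 2 := by
            apply mul_lt_mul_of_pos_right _ (by positivity)
            apply mul_lt_mul_of_pos_left _ (by positivity)
            nlinarith
        _ = (8 * (m : ℝ) ^ 2 + 8 * m) * (x * (s + p + 1)) ^ 2 := by ring
    linarith [hstep]
  -- nonnegativity of L on (1, ∞)
  have hL0 : ∀ x : ℝ, 1 < x → 0 ≤ L x := by
    intro x hx
    have hx0 : (0 : ℝ) < x := by linarith
    have hs := hSpos x hx0
    rw [hL]
    apply div_nonneg (Real.sqrt_nonneg _)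
    have hp : (0:ℝ) < x ^ 4 := by positivity
    nlinarith
  -- continuity of L on (1, ∞)
  have hScont : ContinuousOn S (Set.Ioi (1 : ℝ)) := by
    have hSfun : S = fun x => ∑ k, x ^ (2 * (1 + α k)) := funext hS
    rw [hSfun]
    apply continuousOn_finset_sum
    intro k _ x hx
    exact (Real.continuousAt_rpow_const x _
      (Or.inl (ne_of_gt (lt_trans one_pos (Set.mem_Ioi.mp hx))))).continuousWithinAt
  have hTcont : ContinuousOn T (Set.Ioi (1 : ℝ)) := by
    have hTfun : T = fun x => ∑ k, α k * x ^ (2 * (1 + α k)) := funext hT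
    rw [hTfun]
    apply continuousOn_finset_sum
    intro k _
    apply continuousOn_const.mul
    intro x hx
    exact (Real.continuousAt_rpow_const x _
      (Or.inl (ne_of_gt (lt_trans one_pos (Set.mem_Ioi.mp hx))))).continuousWithinAt
  have hc4 : ContinuousOn (fun x : ℝ => x ^ 4) (Set.Ioi (1 : ℝ)) :=
    (continuous_pow 4).continuousOn
  have hLcont : ContinuousOn L (Set.Ioi (1 : ℝ)) := by
    have hLfun : L = fun x => Real.sqrt ((S x) ^ 2 - (T x) ^ 2
        + 2 * x ^ 4 * (S x - T x) + 2 * (S x + T x) + 4 * x ^ 4) /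
        (x * (S x + x ^ 4 + 1)) := funext hL
    rw [hLfun]
    apply ContinuousOn.div
    · apply Real.continuous_sqrt.comp_continuousOn
      exact ((((hScont.pow 2).sub (hTcont.pow 2)).add
        ((continuousOn_const.mul hc4).mul (hScont.sub hTcont))).add
        (continuousOn_const.mul (hScont.add hTcont))).add (continuousOn_const.mul hc4)
    · exact continuousOn_id.mul ((hScont.add hc4).add continuousOn_const)
    · intro x hx
      have hx1 : 1 < x := Set.mem_Ioi.mp hx
      have hx0 : (0 : ℝ) < x := by linarith
      have hs := hSpos x hx0
      have hp : (0:ℝ) < x ^ 4 := by positivity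
      have : (0:ℝ) < x * (S x + x ^ 4 + 1) := by nlinarith
      exact ne_of_gt this
  have hmeasL : AEStronglyMeasurable L (volume.restrict (Set.Ioi 1)) :=
    hLcont.aestronglyMeasurable measurableSet_Ioi
  have hexp : -(1 + δ) < -1 := by linarith
  have hgint : IntegrableOn (fun x : ℝ => B * x ^ (-(1 + δ))) (Set.Ioi (1 : ℝ)) :=
    (integrableOn_Ioi_rpow_of_lt hexp one_pos).const_mul B
  have hbound : ∀ x ∈ Set.Ioi (1 : ℝ), L x ≤ B * x ^ (-(1 + δ)) := by
    intro x hx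
    have hx1 : 1 < x := Set.mem_Ioi.mp hx
    have hx0 : (0 : ℝ) < x := by linarith
    have h := (hpt x hx1).le
    rwa [div_eq_mul_inv, ← Real.rpow_neg hx0.le] at h
  have hint : IntegrableOn L (Set.Ioi 1) := by
    apply Integrable.mono' hgint hmeasL
    filter_upwards [ae_restrict_mem measurableSet_Ioi] with x hx
    rw [Real.norm_eq_abs, abs_of_nonneg (hL0 x (Set.mem_Ioi.mp hx))]
    exact hbound x hx
  refine ⟨hpt, hint, ?_⟩
  have hval : ∫ x in Set.Ioi (1 : ℝ), B * x ^ (-(1 + δ)) = B * (1 / δ) := by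
    rw [MeasureTheory.integral_const_mul, integral_Ioi_rpow_of_lt hexp one_pos]
    have h1 : -(1 + δ) + 1 = -δ := by ring
    rw [h1, Real.one_rpow]
    congr 1
    field_simp
  calc ∫ x in Set.Ioi (1 : ℝ), L x
      ≤ ∫ x in Set.Ioi (1 : ℝ), B * x ^ (-(1 + δ)) :=
        setIntegral_mono_on hint hgint measurableSet_Ioi hbound
    _ = B * (1 / δ) := hval
    _ = (1 / δ) * Real.sqrt (8 * m ^ 2 + 8 * m) := by rw [hB]; ring
end

section
/- Let n = 2m+2 be even and let x : ℝ → ℝ^n be the curve with components e^{α_k t}cos(β_k t), e^{α_k t}sin(β_k t) (k=1,...,m), e^t, e^{-t}, where α_k ± β_k i are the non-real n-th roots of unity. Then the total first curvature ∫_{-∞}^{∞} k₁(t)‖x'(t)‖ dt is finite, where k₁(t) = ‖x'(t) ∧ x''(t)‖ / ‖x'(t)‖³ and ‖x'∧x''‖² = ‖x'‖²‖x''‖² − ⟨x', x''⟩². -/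
/-! Write the curve through exponentials `e^{z t}` with `|z| = 1`: `z = α k + β k i` for the
coordinate pairs and `z = ± 1` for the last two coordinates. Differentiation multiplies each
`e^{z t}` by `z` and so preserves norms: with `a` running over the rates `Re z`,
`‖x'‖² = ‖x''‖² = S := ∑ e^{2 a t}` and `⟪x', x''⟫ = P := ∑ a e^{2 a t}`, so the integrand is
`√(S² - P²) / S`. Now `S² - P² = (S - P)(S + P) ≤ 2 S (S - P)`; in `S - P = ∑ (1 - a) e^{2 a t}`
the terms with `a = 1`, among them the dominant term `e^{2t}` of `S`, cancel, and all other rates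
are at most some `c < 1`. Hence the integrand is `O(e^{-(1 - c) t})` as `t → ∞`, and the
substitution `(a, t) ↦ (-a, -t)` gives the same decay as `t → -∞`. -/

open Real MeasureTheory

open scoped Complex

theorem Real.exp_mul_sq (a t : ℝ) : rexp (a * t) ^ 2 = rexp (2 * a * t) := by
  rw [sq, ← Real.exp_add]
  congr 1
  ring

theorem exists_lt_one_forall_abs_le_or_abs_eq_one {ι : Type*} [Fintype ι] {a : ι → ℝ}
    (ha : ∀ l, |a l| ≤ 1) : ∃ c, 0 ≤ c ∧ c < 1 ∧ ∀ l, |a l| ≤ c ∨ |a l| = 1 := by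
  classical
  set F := insert 0 ((Finset.univ.filter fun l => |a l| < 1).image fun l => |a l|)
  have hF : ∀ y, y ∈ F ↔ y = 0 ∨ ∃ l, |a l| < 1 ∧ |a l| = y := by
    simp [F]
  refine ⟨F.max' (Finset.insert_nonempty _ _), F.le_max' _ (Finset.mem_insert_self _ _),
    (F.max'_lt_iff _).2 ?_, fun l => (ha l).lt_or_eq.imp (fun h => F.le_max' _ ?_) id⟩
  · rintro y hy
    rcases (hF y).1 hy with rfl | ⟨l, hl, rfl⟩
    exacts [one_pos, hl]
  · exact (hF _).2 (Or.inr ⟨l, h, rfl⟩)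

theorem one_sub_mul_exp_le {a c t : ℝ} (hc0 : 0 ≤ c) (hc1 : c ≤ 1) (ha : |a| ≤ c ∨ |a| = 1)
    (ht : 0 ≤ t) : (1 - a) * rexp (2 * a * t) ≤ 2 * rexp (2 * c * t) := by
  rcases ha with ha | ha
  · obtain ⟨ha₁, ha₂⟩ := abs_le.1 ha
    gcongr
    linarith
  · rcases (abs_eq zero_le_one).1 ha with rfl | rfl
    · simp only [sub_self, zero_mul]
      positivity
    · norm_num
      nlinarith

section ExpSum

variable {ι : Type*} [Fintype ι]

noncomputable def expSum (a : ι → ℝ) (t : ℝ) : ℝ := ∑ l, rexp (2 * a l * t)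

noncomputable def expMoment (a : ι → ℝ) (t : ℝ) : ℝ := ∑ l, a l * rexp (2 * a l * t)

noncomputable def expCurvatureDensity (a : ι → ℝ) (t : ℝ) : ℝ :=
  √(expSum a t ^ 2 - expMoment a t ^ 2) / expSum a t

theorem expSum_nonneg (a : ι → ℝ) (t : ℝ) : 0 ≤ expSum a t :=
  Finset.sum_nonneg fun _ _ => (exp_pos _).le

theorem expCurvatureDensity_nonneg (a : ι → ℝ) (t : ℝ) : 0 ≤ expCurvatureDensity a t :=
  div_nonneg (Real.sqrt_nonneg _) (expSum_nonneg a t)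

theorem expCurvatureDensity_neg (a : ι → ℝ) (t : ℝ) :
    expCurvatureDensity (-a) (-t) = expCurvatureDensity a t := by
  simp [expCurvatureDensity, expSum, expMoment]

theorem measurable_expCurvatureDensity (a : ι → ℝ) : Measurable (expCurvatureDensity a) := by
  unfold expCurvatureDensity expSum expMoment
  fun_prop

variable {a : ι → ℝ} {c : ℝ}

theorem expCurvatureDensity_le (hc0 : 0 ≤ c) (hc1 : c ≤ 1) (ha : ∀ l, |a l| ≤ c ∨ |a l| = 1)
    (h1 : ∃ l, a l = 1) {t : ℝ} (ht : 0 ≤ t) :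
    expCurvatureDensity a t ≤ 2 * √(Fintype.card ι) * rexp (-(1 - c) * t) := by
  obtain ⟨l₁, hl₁⟩ := h1
  set S := expSum a t
  set P := expMoment a t
  have hS : rexp (2 * t) ≤ S := by
    simpa [S, expSum, hl₁] using Finset.single_le_sum (fun l _ => (exp_pos (2 * a l * t)).le)
      (Finset.mem_univ l₁)
  have hSpos : 0 < S := (exp_pos _).trans_le hS
  have habs : ∀ l, |a l| ≤ 1 := fun l => (ha l).elim (·.trans hc1) le_of_eq
  have hsub : S - P = ∑ l, (1 - a l) * rexp (2 * a l * t) := by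
    simp only [S, P, expSum, expMoment, ← Finset.sum_sub_distrib, sub_mul, one_mul]
  have hadd : S + P = ∑ l, (1 + a l) * rexp (2 * a l * t) := by
    simp only [S, P, expSum, expMoment, ← Finset.sum_add_distrib, add_mul, one_mul]
  have hsub_nonneg : 0 ≤ S - P := hsub ▸ Finset.sum_nonneg fun l _ =>
    mul_nonneg (by linarith [(abs_le.1 (habs l)).2]) (exp_pos _).le
  have hadd_nonneg : 0 ≤ S + P := hadd ▸ Finset.sum_nonneg fun l _ =>
    mul_nonneg (by linarith [(abs_le.1 (habs l)).1]) (exp_pos _).le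
  have hsub_le : S - P ≤ 2 * Fintype.card ι * rexp (2 * c * t) := by
    rw [hsub]
    refine (Finset.sum_le_sum fun l _ => one_sub_mul_exp_le hc0 hc1 (ha l) ht).trans_eq ?_
    simp only [Finset.sum_const, Finset.card_univ, nsmul_eq_mul]
    ring
  have hexp : rexp (2 * c * t) = rexp (-(1 - c) * t) ^ 2 * rexp (2 * t) := by
    rw [Real.exp_mul_sq, ← Real.exp_add]
    ring_nf
  rw [expCurvatureDensity, div_le_iff₀ hSpos, Real.sqrt_le_left (by positivity)]
  calc S ^ 2 - P ^ 2 = (S - P) * (S + P) := by ring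
    _ ≤ (2 * Fintype.card ι * rexp (2 * c * t)) * (2 * S) :=
        mul_le_mul hsub_le (by linarith) hadd_nonneg (by positivity)
    _ = 4 * Fintype.card ι * rexp (-(1 - c) * t) ^ 2 * rexp (2 * t) * S := by
        rw [hexp]
        ring
    _ ≤ 4 * Fintype.card ι * rexp (-(1 - c) * t) ^ 2 * S * S := by gcongr
    _ = (2 * √(Fintype.card ι) * rexp (-(1 - c) * t) * S) ^ 2 := by
        rw [mul_pow, mul_pow, mul_pow, Real.sq_sqrt (Nat.cast_nonneg _)]
        ring

theorem integrable_expCurvatureDensity (ha : ∀ l, |a l| ≤ 1) (h1 : ∃ l, a l = 1)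
    (hneg : ∃ l, a l = -1) : Integrable (expCurvatureDensity a) := by
  obtain ⟨c, hc0, hc1, hc⟩ := exists_lt_one_forall_abs_le_or_abs_eq_one ha
  have hmeas := (measurable_expCurvatureDensity a).aestronglyMeasurable (μ := volume)
  rw [← integrableOn_univ, ← Set.Iic_union_Ioi (a := 0), integrableOn_union]
  constructor
  · refine ((integrableOn_exp_mul_Iic (by linarith : 0 < 1 - c) 0).const_mul
      (2 * √(Fintype.card ι))).mono' hmeas.restrict
      (ae_restrict_of_forall_mem measurableSet_Iic fun t ht => ?_)
    have := expCurvatureDensity_le (a := -a) hc0 hc1.le (by simpa using hc)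
      (hneg.imp fun l hl => by simp [hl]) (neg_nonneg.2 ht)
    rw [expCurvatureDensity_neg, neg_mul_neg] at this
    rwa [Real.norm_of_nonneg (expCurvatureDensity_nonneg a t)]
  · refine ((integrableOn_exp_mul_Ioi (by linarith : -(1 - c) < 0) 0).const_mul
      (2 * √(Fintype.card ι))).mono' hmeas.restrict
      (ae_restrict_of_forall_mem measurableSet_Ioi fun t ht => ?_)
    rw [Real.norm_of_nonneg (expCurvatureDensity_nonneg a t)]
    exact expCurvatureDensity_le hc0 hc1.le hc h1 ht.le

end ExpSum

theorem Complex.re_sq_add_im_sq (w : ℂ) : w.re ^ 2 + w.im ^ 2 = ‖w‖ ^ 2 := by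
  rw [Complex.sq_norm, Complex.normSq_apply]
  ring

theorem Complex.re_mul_re_add_im_mul_im (w z : ℂ) :
    w.re * (w * z).re + w.im * (w * z).im = ‖w‖ ^ 2 * z.re := by
  simp only [Complex.mul_re, Complex.mul_im, Complex.sq_norm, Complex.normSq_apply]
  ring

theorem hasDerivAt_mul_cexp_ofReal (w z : ℂ) (t : ℝ) :
    HasDerivAt (fun t : ℝ => w * cexp (z * t)) (w * z * cexp (z * t)) t := by
  have h := (((hasDerivAt_id (t : ℂ)).const_mul z).cexp.const_mul w).comp_ofReal
  simp only [id_eq, mul_one] at h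
  exact h.congr_deriv (by ring)

theorem hasDerivAt_re_mul_cexp_ofReal (w z : ℂ) (t : ℝ) :
    HasDerivAt (fun t : ℝ => (w * cexp (z * t)).re) (w * z * cexp (z * t)).re t :=
  Complex.reCLM.hasFDerivAt.comp_hasDerivAt t (hasDerivAt_mul_cexp_ofReal w z t)

theorem hasDerivAt_im_mul_cexp_ofReal (w z : ℂ) (t : ℝ) :
    HasDerivAt (fun t : ℝ => (w * cexp (z * t)).im) (w * z * cexp (z * t)).im t :=
  Complex.imCLM.hasFDerivAt.comp_hasDerivAt t (hasDerivAt_mul_cexp_ofReal w z t)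

theorem hasDerivAt_mul_rexp (c a t : ℝ) :
    HasDerivAt (fun t => c * rexp (a * t)) (c * a * rexp (a * t)) t := by
  have h := ((hasDerivAt_id t).const_mul a).exp.const_mul c
  simp only [id_eq, mul_one] at h
  exact h.congr_deriv (by ring)

theorem hasDerivAt_euclidean {ι : Type*} [Fintype ι] {f : ℝ → EuclideanSpace ℝ ι}
    {f' : EuclideanSpace ℝ ι} {t : ℝ} (h : ∀ i, HasDerivAt (fun s => f s i) (f' i) t) :
    HasDerivAt f f' t := by
  rw [hasDerivAt_iff_hasFDerivAt, ← hasFDerivWithinAt_univ, hasFDerivWithinAt_euclidean]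
  exact fun i => (h i).hasFDerivAt.hasFDerivWithinAt

section ExpCurve

variable {ι κ : Type*} [Fintype ι] [Fintype κ] (z : ι → ℂ) (s : κ → ℝ)

/- `expCurve z s j` is the `j`-th derivative of `expCurve z s 0`. -/
noncomputable def expCurve (j : ℕ) (t : ℝ) : EuclideanSpace ℝ (ι ⊕ ι ⊕ κ) :=
  WithLp.toLp 2 (Sum.elim (fun k => (z k ^ j * cexp (z k * t)).re)
    (Sum.elim (fun k => (z k ^ j * cexp (z k * t)).im) fun i => s i ^ j * rexp (s i * t)))

theorem hasDerivAt_expCurve (j : ℕ) (t : ℝ) :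
    HasDerivAt (expCurve z s j) (expCurve z s (j + 1) t) t := by
  refine hasDerivAt_euclidean ?_
  rintro (k | k | i) <;> simp only [expCurve, Sum.elim_inl, Sum.elim_inr, pow_succ]
  · exact hasDerivAt_re_mul_cexp_ofReal _ _ t
  · exact hasDerivAt_im_mul_cexp_ofReal _ _ t
  · exact hasDerivAt_mul_rexp _ _ t

theorem deriv_expCurve (j : ℕ) : deriv (expCurve z s j) = expCurve z s (j + 1) :=
  funext fun t => (hasDerivAt_expCurve z s j t).deriv

variable {z s}

theorem norm_expCurve_sq (hz : ∀ k, ‖z k‖ = 1) (hs : ∀ i, |s i| = 1) (j : ℕ) (t : ℝ) :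
    ‖expCurve z s j t‖ ^ 2 = expSum (Sum.elim (fun k => (z k).re) s) t := by
  rw [expSum, EuclideanSpace.norm_sq_eq, Fintype.sum_sum_type, Fintype.sum_sum_type,
    Fintype.sum_sum_type, ← add_assoc, ← Finset.sum_add_distrib]
  congr 1
  · refine Finset.sum_congr rfl fun k _ => ?_
    simp only [expCurve, Sum.elim_inl, Sum.elim_inr, Real.norm_eq_abs, sq_abs,
      Complex.re_sq_add_im_sq]
    simp [Complex.norm_exp, hz, Real.exp_mul_sq]
  · refine Finset.sum_congr rfl fun i _ => ?_
    simp only [expCurve, Sum.elim_inr, Real.norm_eq_abs, sq_abs]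
    rw [mul_pow, ← pow_mul, mul_comm j, pow_mul, ← sq_abs, hs]
    simp [Real.exp_mul_sq]

theorem inner_expCurve_succ (hz : ∀ k, ‖z k‖ = 1) (hs : ∀ i, |s i| = 1) (j : ℕ) (t : ℝ) :
    inner ℝ (expCurve z s j t) (expCurve z s (j + 1) t) =
      expMoment (Sum.elim (fun k => (z k).re) s) t := by
  rw [expMoment, PiLp.inner_apply, Fintype.sum_sum_type, Fintype.sum_sum_type,
    Fintype.sum_sum_type, ← add_assoc, ← Finset.sum_add_distrib]
  congr 1
  · refine Finset.sum_congr rfl fun k _ => ?_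
    simp only [expCurve, Sum.elim_inl, Sum.elim_inr, Real.inner_apply, pow_succ,
      mul_right_comm _ (z k)]
    rw [Complex.re_mul_re_add_im_mul_im]
    simp only [Complex.norm_mul, norm_pow, hz, one_pow, one_mul, Complex.norm_exp,
      Complex.re_mul_ofReal, Real.exp_mul_sq, mul_comm (rexp _)]
  · refine Finset.sum_congr rfl fun i _ => ?_
    simp only [expCurve, Sum.elim_inr, Real.inner_apply]
    have hs2 : s i ^ j * s i ^ j = 1 := by
      rw [← mul_pow, ← sq, ← sq_abs, hs, one_pow, one_pow]
    rw [← Real.exp_mul_sq]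
    linear_combination (s i * rexp (s i * t) ^ 2) * hs2

end ExpCurve

theorem sqrt_gram_div_norm_pow_three_mul_norm {E : Type*} [NormedAddCommGroup E]
    [InnerProductSpace ℝ E] {u v : E} (h : ‖u‖ = ‖v‖) :
    √(‖u‖ ^ 2 * ‖v‖ ^ 2 - inner ℝ u v ^ 2) / ‖u‖ ^ 3 * ‖u‖ =
      √((‖u‖ ^ 2) ^ 2 - inner ℝ u v ^ 2) / ‖u‖ ^ 2 := by
  rw [← h]
  rcases eq_or_ne ‖u‖ 0 with h0 | h0
  · simp [h0]
  · field_simp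

theorem even_curve_finite_total_curvature_general (m : ℕ)
    (α β : Fin m → ℝ)
    (hroot : ∀ k, ((α k : ℂ) + (β k : ℂ) * Complex.I) ^ (2 * m + 2) = 1)
    (x : ℝ → EuclideanSpace ℝ (Fin m ⊕ Fin m ⊕ Fin 2))
    (hx : ∀ t, x t = WithLp.toLp 2 (Sum.elim (fun k => Real.exp (α k * t) * Real.cos (β k * t))
        (Sum.elim (fun k => Real.exp (α k * t) * Real.sin (β k * t))
          (fun j => if j = 0 then Real.exp t else Real.exp (-t))))) :
    Integrable (fun t : ℝ =>
      (Real.sqrt (‖deriv x t‖ ^ 2 * ‖deriv (deriv x) t‖ ^ 2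
          - (inner ℝ (deriv x t) (deriv (deriv x) t) : ℝ) ^ 2) / ‖deriv x t‖ ^ 3)
        * ‖deriv x t‖) := by
  set z : Fin m → ℂ := fun k => α k + β k * Complex.I
  set s : Fin 2 → ℝ := ![1, -1]
  have hz : ∀ k, ‖z k‖ = 1 := fun k => Complex.norm_eq_one_of_pow_eq_one (hroot k) (by omega)
  have hs : ∀ i, |s i| = 1 := by simp [s, Fin.forall_fin_two]
  have hx0 : x = expCurve z s 0 := by
    funext t
    rw [hx]
    congr 1
    ext (k | k | i)
    · simp [z, Complex.exp_re]
    · simp [z, Complex.exp_im]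
    · fin_cases i <;> simp [s]
  have hnorm : ∀ t, ‖expCurve z s 1 t‖ = ‖expCurve z s 2 t‖ := fun t =>
    (sq_eq_sq₀ (norm_nonneg _) (norm_nonneg _)).1
      (by rw [norm_expCurve_sq hz hs, norm_expCurve_sq hz hs])
  rw [hx0, deriv_expCurve, deriv_expCurve]
  simp_rw [sqrt_gram_div_norm_pow_three_mul_norm (hnorm _), norm_expCurve_sq hz hs,
    inner_expCurve_succ hz hs]
  refine integrable_expCurvatureDensity ?_ ⟨Sum.inr 0, rfl⟩ ⟨Sum.inr 1, rfl⟩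
  rintro (k | i)
  · exact (Complex.abs_re_le_norm _).trans (hz k).le
  · exact (hs i).le

theorem even_curve_finite_total_curvature (m : ℕ) (hm : 1 ≤ m)
    (α β : Fin m → ℝ)
    (hroot : ∀ k, ((α k : ℂ) + (β k : ℂ) * Complex.I) ^ (2 * m + 2) = 1)
    (hβ : ∀ k, β k ≠ 0)
    (x : ℝ → EuclideanSpace ℝ (Fin m ⊕ Fin m ⊕ Fin 2))
    (hx : ∀ t, x t = WithLp.toLp 2 (Sum.elim (fun k => Real.exp (α k * t) * Real.cos (β k * t))
        (Sum.elim (fun k => Real.exp (α k * t) * Real.sin (β k * t))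
          (fun j => if j = 0 then Real.exp t else Real.exp (-t))))) :
    Integrable (fun t : ℝ =>
      (Real.sqrt (‖deriv x t‖ ^ 2 * ‖deriv (deriv x) t‖ ^ 2
          - (inner ℝ (deriv x t) (deriv (deriv x) t) : ℝ) ^ 2) / ‖deriv x t‖ ^ 3)
        * ‖deriv x t‖) :=
  even_curve_finite_total_curvature_general m α β hroot x hx
end
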